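/- Let P ⊂ ℕ× be a multiplicative submonoid and ψ : P → C(𝕋,𝕋) a θ-twisted homomorphism (ψ_{pq}(z) = ψ_p(z)ψ_q(z^p)). If there exists n ∈ P with n ≥ 2 such that ψ_n is a constant function, then ψ_p is constant for every p ∈ P. -/

import Mathlib

/-!
Comparing `ψ_{pn}` with `ψ_{np}` shows that, when `ψ_n` is constant, every `ψ_p` is invariant
under `z ↦ z ^ n`, hence under `z ↦ z ^ (n ^ k)`. Every `z = exp t` has the `n ^ k`-th root
`exp (t / n ^ k)`, and these roots tend to `1`, so continuity forces `ψ_p z = ψ_p 1`.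
-/

open Filter Topology

def IsTwistedHom {M G : Type*} [Monoid M] [Mul G] (P : Submonoid ℕ) (ψ : ℕ → M → G) : Prop :=
  ∀ p q : ℕ, p ∈ P → q ∈ P → ∀ z : M, ψ (p * q) z = ψ p z * ψ q (z ^ p)

theorem IsTwistedHom.apply_pow_eq_of_const {M G : Type*} [Monoid M] [CancelCommMonoid G]
    {P : Submonoid ℕ} {ψ : ℕ → M → G} (hψ : IsTwistedHom P ψ) {n p : ℕ} (hn : n ∈ P)
    (hp : p ∈ P) {c : G} (hc : ∀ z, ψ n z = c) (z : M) : ψ p (z ^ n) = ψ p z := by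
  have h := hψ n p hn hp z
  rw [mul_comm n p, hψ p n hp hn z, hc, hc, mul_comm (ψ p z)] at h
  exact (mul_left_cancel h).symm

theorem apply_pow_pow_eq_of_apply_pow_eq {M X : Type*} [Monoid M] {f : M → X} {n : ℕ}
    (h : ∀ z, f (z ^ n) = f z) (k : ℕ) (z : M) : f (z ^ n ^ k) = f z := by
  induction k with
  | zero => rw [pow_zero, pow_one]
  | succ k ih => rw [pow_succ, pow_mul, h, ih]

theorem Circle.tendsto_exp_div_pow_nhds_one (t : ℝ) {n : ℕ} (hn : 1 < n) :
    Tendsto (fun k : ℕ => Circle.exp (t / (n : ℝ) ^ k)) atTop (𝓝 1) := by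
  have hinv : Tendsto (fun k : ℕ => ((n : ℝ) ^ k)⁻¹) atTop (𝓝 0) :=
    tendsto_inv_atTop_zero.comp (tendsto_pow_atTop_atTop_of_one_lt (by exact_mod_cast hn))
  have hdiv : Tendsto (fun k : ℕ => t / (n : ℝ) ^ k) atTop (𝓝 0) := by
    simpa only [div_eq_mul_inv, mul_zero] using hinv.const_mul t
  simpa only [Circle.exp_zero, Function.comp_def] using (Circle.exp.continuous.tendsto 0).comp hdiv

theorem Circle.apply_eq_apply_one_of_apply_pow_eq {X : Type*} [TopologicalSpace X] [T2Space X]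
    {f : Circle → X} (hf : Continuous f) {n : ℕ} (hn : 1 < n) (h : ∀ z, f (z ^ n) = f z)
    (z : Circle) : f z = f 1 := by
  obtain ⟨t, rfl⟩ := Circle.exp_surjective z
  have hroot : ∀ k : ℕ, Circle.exp (t / (n : ℝ) ^ k) ^ n ^ k = Circle.exp t := fun k => by
    rw [← Circle.exp_natCast_mul, Nat.cast_pow, mul_div_cancel₀ _ (by positivity)]
  have hconst : ∀ k : ℕ, f (Circle.exp (t / (n : ℝ) ^ k)) = f (Circle.exp t) := fun k => by
    rw [← apply_pow_pow_eq_of_apply_pow_eq h k, hroot]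
  refine tendsto_nhds_unique ?_ ((hf.tendsto 1).comp (Circle.tendsto_exp_div_pow_nhds_one t hn))
  simp only [Function.comp_def, hconst, tendsto_const_nhds]

/-- If a θ-twisted homomorphism `ψ : P → C(𝕋,𝕋)` has `ψ_n` constant for some `n ∈ P`
with `n ≥ 2`, then `ψ_p` is constant for every `p ∈ P`. -/
theorem stmt13 (P : Submonoid ℕ) (ψ : ℕ → C(Circle, Circle))
    (htwist : ∀ p q : ℕ, p ∈ P → q ∈ P → ∀ z : Circle,
      ψ (p * q) z = ψ p z * ψ q (z ^ p))
    (n : ℕ) (hn : n ∈ P) (hn2 : 2 ≤ n)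
    (hconst : ∃ c : Circle, ∀ z : Circle, ψ n z = c) :
    ∀ p : ℕ, p ∈ P → ∃ c : Circle, ∀ z : Circle, ψ p z = c := by
  intro p hp
  obtain ⟨c, hc⟩ := hconst
  have hψ : IsTwistedHom P fun q => ⇑(ψ q) := htwist
  exact ⟨ψ p 1, Circle.apply_eq_apply_one_of_apply_pow_eq (ψ p).continuous hn2
    (hψ.apply_pow_eq_of_const hn hp hc)⟩
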